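/- Let r > 0, c > 1 and R > 0 with c·r < π·sinh(R). Set p₁ = 1 − r/(π·sinh(R)) and p₂ = 1 − c·r/(π·sinh(R)). Then 0 < p₂ < p₁ < 1, and there exist a probability measure μ on ℝ × ℝ and a function H : ℝ × ℝ → (ℂ → Bool) such that for all points u, v of the open unit disk with d_D(0,u) ≤ R and d_D(0,v) ≤ R: (i) if d_D(u,v) ≤ r then μ{ω : H(ω)(u) = H(ω)(v)} ≥ p₁; (ii) if d_D(u,v) ≥ c·r then μ{ω : H(ω)(u) = H(ω)(v)} ≤ p₂; moreover log(1/p₁)/log(1/p₂) ≤ 1/c. -/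

import Mathlib

open Real MeasureTheory

/-- The inverse hyperbolic cosine. -/
noncomputable def arcosh (x : ℝ) : ℝ := Real.log (x + Real.sqrt (x ^ 2 - 1))

/-- The hyperbolic distance between two points of the Poincaré disk. -/
noncomputable def poincareDist (u v : ℂ) : ℝ :=
  _root_.arcosh (1 + 2 * ‖u - v‖ ^ 2 /
    ((1 - ‖u‖ ^ 2) * (1 - ‖v‖ ^ 2)))

/-!
A geodesic meeting the ball of radius `R` is the perpendicular to some diameter at signed distance
`t` from `0` with `|sinh t| ≤ sinh R`; in the coordinates `(θ, sinh t)` the kinematic measure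
`cosh t dt dθ` becomes Lebesgue measure on a box. A point `z` is on one side of that geodesic iff
`sinh t` is below `sinh` of the position of the foot of the perpendicular from `z`, so `u` and `v`
are separated with probability `∫₀^{2π} |sinhFoot u θ - sinhFoot v θ| dθ / (4π sinh R)`.

Crofton's formula evaluates this integral to `4 d(u, v)`: `sinhFoot z` is the `θ`-derivative of the
signed distance from `z` to the diameter, the integrand changes sign only at the two opposite
directions for which `u` and `v` lie on a common perpendicular, and there the difference of their
signed distances to the diameter is `d(u, v)`. The bound on the exponent is Bernoulli's inequality
`(1 - x) ^ c ≥ 1 - c x`.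
-/

theorem monotoneOn_div_sqrt_one_sub_sq :
    MonotoneOn (fun x : ℝ => x / √(1 - x ^ 2)) (Set.Ioo (-1) 1) := by
  intro a ha b hb hab
  have mem_Ioo : ∀ x ∈ Set.Ioo (-1 : ℝ) 1, arcsin x ∈ Set.Ioo (-(π / 2)) (π / 2) :=
    fun x hx => ⟨neg_pi_div_two_lt_arcsin.2 hx.1, arcsin_lt_pi_div_two.2 hx.2⟩
  simp only [← tan_arcsin]
  exact strictMonoOn_tan.monotoneOn (mem_Ioo a ha) (mem_Ioo b hb) (arcsin_le_arcsin hab)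

theorem abs_div_sqrt_one_sub_sq_le {a b : ℝ} (hab : |a| ≤ b) (hb : b < 1) :
    |a / √(1 - a ^ 2)| ≤ b / √(1 - b ^ 2) := by
  have h := monotoneOn_div_sqrt_one_sub_sq ⟨by linarith [abs_nonneg a], by linarith⟩
    ⟨by linarith [abs_nonneg a], hb⟩ hab
  rwa [abs_div, abs_of_nonneg (sqrt_nonneg _), ← sq_abs a]

theorem two_mul_div_one_add_sq_lt_one {r : ℝ} (hr : r ≠ 1) : 2 * r / (1 + r ^ 2) < 1 := by
  rw [div_lt_one (by positivity)]
  nlinarith [sq_pos_of_ne_zero (sub_ne_zero.2 hr)]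

theorem exists_re_mul_cos_add_im_mul_sin_eq (w : ℂ) :
    ∃ φ : ℝ, ∀ θ, w.re * cos θ + w.im * sin θ = ‖w‖ * sin (θ - φ) := by
  refine ⟨w.arg - π / 2, fun θ => ?_⟩
  rw [← Complex.norm_mul_cos_arg, ← Complex.norm_mul_sin_arg,
    show θ - (w.arg - π / 2) = θ - w.arg + π / 2 by ring, sin_add_pi_div_two, cos_sub]
  ring

theorem integral_abs_eq_two_mul_of_antiperiodic {f : ℝ → ℝ} {c : ℝ} (hf : Continuous f)
    (h : Function.Antiperiodic f c) (a : ℝ) :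
    ∫ x in (0 : ℝ)..2 * c, |f x| = 2 * ∫ x in a..a + c, |f x| := by
  have hper : Function.Periodic (fun x => |f x|) c := fun x => by simp only [h x, abs_neg]
  calc ∫ x in (0 : ℝ)..2 * c, |f x|
      = (∫ x in (0 : ℝ)..0 + c, |f x|) + ∫ x in c..c + c, |f x| := by
        rw [zero_add, two_mul, intervalIntegral.integral_add_adjacent_intervals]
        all_goals exact hf.abs.intervalIntegrable _ _
    _ = 2 * ∫ x in a..a + c, |f x| := by
        rw [hper.intervalIntegral_add_eq 0 a, hper.intervalIntegral_add_eq c a]; ring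

theorem log_one_div_one_sub_ratio_le {x c : ℝ} (hx : 0 < x) (hc : 1 ≤ c) (hcx : c * x < 1) :
    log (1 / (1 - x)) / log (1 / (1 - c * x)) ≤ 1 / c := by
  have hx1 : x < 1 := by nlinarith
  have bernoulli : 1 - c * x ≤ (1 - x) ^ c := by
    simpa [sub_eq_add_neg] using one_add_mul_self_le_rpow_one_add (by linarith : -1 ≤ -x) hc
  have hlog : log (1 - c * x) ≤ c * log (1 - x) := by
    rw [← log_rpow (by linarith)]
    exact log_le_log (by linarith) bernoulli
  have hneg : log (1 - c * x) < 0 := log_neg (by linarith) (by nlinarith)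
  rw [one_div (1 - x), one_div (1 - c * x), log_inv, log_inv,
    div_le_div_iff₀ (by linarith) (by positivity)]
  linarith

open ProbabilityTheory

theorem volume_regionBetween_co_eq_lintegral {α : Type*} [MeasurableSpace α] {μ : Measure α}
    {f g : α → ℝ} {s : Set α} (hf : Measurable f) (hg : Measurable g) (hs : MeasurableSet s) :
    μ.prod volume {p : α × ℝ | p.1 ∈ s ∧ p.2 ∈ Set.Ico (f p.1) (g p.1)} =
      ∫⁻ x in s, ENNReal.ofReal (g x - f x) ∂μ := by
  rw [Measure.prod_apply (measurableSet_region_between_co hf hg hs), ← lintegral_indicator hs]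
  congr 1
  funext x
  by_cases hx : x ∈ s
  · rw [Set.indicator_of_mem hx, ← Real.volume_Ico]
    congr 1
    ext
    simp [hx]
  · simp [hx]

theorem cond_Ioc_prod_Icc_regionBetween_co {f g : ℝ → ℝ} (hf : Continuous f)
    (hg : Continuous g) {L S : ℝ} (hL : 0 < L) (hS : 0 < S) (hfS : ∀ x, |f x| ≤ S)
    (hgS : ∀ x, |g x| ≤ S) :
    volume[|Set.Ioc 0 L ×ˢ Set.Icc (-S) S]
        {ω : ℝ × ℝ | ω.2 ∈ Set.Ico (min (f ω.1) (g ω.1)) (max (f ω.1) (g ω.1))} =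
      ENNReal.ofReal ((∫ x in (0 : ℝ)..L, |f x - g x|) / (2 * S * L)) := by
  have hbox : volume (Set.Ioc 0 L ×ˢ Set.Icc (-S) S) = ENNReal.ofReal (2 * S * L) := by
    rw [Measure.volume_eq_prod, Measure.prod_prod, Real.volume_Ioc, Real.volume_Icc,
      ← ENNReal.ofReal_mul (by linarith)]
    ring_nf
  have hregion : Set.Ioc 0 L ×ˢ Set.Icc (-S) S ∩
      {ω : ℝ × ℝ | ω.2 ∈ Set.Ico (min (f ω.1) (g ω.1)) (max (f ω.1) (g ω.1))} =
      {ω : ℝ × ℝ | ω.1 ∈ Set.Ioc 0 L ∧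
        ω.2 ∈ Set.Ico (min (f ω.1) (g ω.1)) (max (f ω.1) (g ω.1))} := by
    ext ⟨x, s⟩
    have hf' := abs_le.1 (hfS x)
    have hg' := abs_le.1 (hgS x)
    simp only [Set.mem_inter_iff, Set.mem_prod, Set.mem_Icc, Set.mem_ofPred_eq, Set.mem_Ico]
    exact ⟨fun h => ⟨h.1.1, h.2⟩, fun h => ⟨⟨h.1, (le_min hf'.1 hg'.1).trans h.2.1,
      h.2.2.le.trans (max_le hf'.2 hg'.2)⟩, h.2⟩⟩
  have hint : IntegrableOn (fun x => |f x - g x|) (Set.Ioc 0 L) :=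
    (hf.sub hg).abs.integrableOn_Ioc
  rw [cond_apply (measurableSet_Ioc.prod measurableSet_Icc), hregion, hbox, Measure.volume_eq_prod,
    volume_regionBetween_co_eq_lintegral (hf.min hg).measurable (hf.max hg).measurable
      measurableSet_Ioc]
  simp_rw [max_sub_min_eq_abs']
  rw [← ofReal_integral_eq_lintegral_ofReal hint (.of_forall fun x => abs_nonneg _),
    ← intervalIntegral.integral_of_le hL.le, ENNReal.ofReal_div_of_pos (by positivity),
    ENNReal.div_eq_inv_mul]

theorem decide_lt_eq_decide_lt_iff {α : Type*} [LinearOrder α] {a b s : α} :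
    decide (s < a) = decide (s < b) ↔ s ∉ Set.Ico (min a b) (max a b) := by
  simp only [decide_eq_decide, Set.mem_Ico, min_le_iff, lt_max_iff]
  grind

/- `2 u / (1 + ‖u‖ ^ 2)` is the image of `u` in the Beltrami–Klein model, where the perpendiculars
to a diameter are the chords orthogonal to it; so `kleinProj u θ` is the Klein coordinate of the
foot of the perpendicular from `u` to the diameter through `exp (θ * I)`, and `sinhFoot u θ` is
`sinh` of the hyperbolic position of that foot. `signedDistDiameter u θ` is the signed distance
from `u` to that diameter. -/
noncomputable def kleinProj (u : ℂ) (θ : ℝ) : ℝ :=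
  2 * (u.re * cos θ + u.im * sin θ) / (1 + ‖u‖ ^ 2)

noncomputable def sinhFoot (u : ℂ) (θ : ℝ) : ℝ :=
  kleinProj u θ / √(1 - kleinProj u θ ^ 2)

noncomputable def signedDistDiameter (u : ℂ) (θ : ℝ) : ℝ :=
  arsinh (2 * (u.re * sin θ - u.im * cos θ) / (1 - ‖u‖ ^ 2))

theorem one_sub_norm_sq_pos {E : Type*} [SeminormedAddCommGroup E] {u : E} (hu : ‖u‖ < 1) :
    0 < 1 - ‖u‖ ^ 2 := by
  nlinarith [norm_nonneg u]

theorem rotated_sq_add_sq_eq_norm_sq (u : ℂ) (θ : ℝ) :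
    (u.re * cos θ + u.im * sin θ) ^ 2 + (u.re * sin θ - u.im * cos θ) ^ 2 = ‖u‖ ^ 2 := by
  rw [Complex.sq_norm, Complex.normSq_apply]
  linear_combination (u.re ^ 2 + u.im ^ 2) * sin_sq_add_cos_sq θ

theorem abs_kleinProj_le (u : ℂ) (θ : ℝ) : |kleinProj u θ| ≤ 2 * ‖u‖ / (1 + ‖u‖ ^ 2) := by
  have hx : |u.re * cos θ + u.im * sin θ| ≤ ‖u‖ := abs_le_of_sq_le_sq (by
    nlinarith [rotated_sq_add_sq_eq_norm_sq u θ, sq_nonneg (u.re * sin θ - u.im * cos θ)])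
    (norm_nonneg u)
  rw [kleinProj, abs_div, abs_mul, abs_two, abs_of_pos (by positivity : (0 : ℝ) < 1 + ‖u‖ ^ 2)]
  gcongr

theorem abs_kleinProj_lt_one {u : ℂ} (hu : ‖u‖ < 1) (θ : ℝ) : |kleinProj u θ| < 1 :=
  (abs_kleinProj_le u θ).trans_lt (two_mul_div_one_add_sq_lt_one hu.ne)

theorem sinh_poincareDist_zero_left {u : ℂ} (hu : ‖u‖ < 1) :
    sinh (poincareDist 0 u) = 2 * ‖u‖ / (1 - ‖u‖ ^ 2) := by
  have hq := one_sub_norm_sq_pos hu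
  have h1 : 1 ≤ 1 + 2 * ‖u‖ ^ 2 / (1 - ‖u‖ ^ 2) := le_add_of_nonneg_right (by positivity)
  rw [poincareDist, zero_sub, norm_neg, norm_zero, zero_pow two_ne_zero, sub_zero, one_mul,
    show _root_.arcosh = Real.arcosh from rfl, sinh_arcosh h1,
    ← sqrt_sq (by positivity : 0 ≤ 2 * ‖u‖ / (1 - ‖u‖ ^ 2))]
  congr 1
  field_simp
  ring

theorem abs_sinhFoot_le {u : ℂ} (hu : ‖u‖ < 1) (θ : ℝ) :
    |sinhFoot u θ| ≤ sinh (poincareDist 0 u) := by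
  have hq := one_sub_norm_sq_pos hu
  have h1 : 1 - (2 * ‖u‖ / (1 + ‖u‖ ^ 2)) ^ 2 = ((1 - ‖u‖ ^ 2) / (1 + ‖u‖ ^ 2)) ^ 2 := by
    field_simp; ring
  rw [sinh_poincareDist_zero_left hu]
  refine (abs_div_sqrt_one_sub_sq_le (abs_kleinProj_le u θ)
    (two_mul_div_one_add_sq_lt_one hu.ne)).trans_eq ?_
  rw [h1, sqrt_sq (by positivity)]
  field_simp

theorem one_sub_kleinProj_sq_pos {u : ℂ} (hu : ‖u‖ < 1) (θ : ℝ) : 0 < 1 - kleinProj u θ ^ 2 := by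
  rw [sub_pos, sq_lt_one_iff_abs_lt_one]
  exact abs_kleinProj_lt_one hu θ

theorem continuous_sinhFoot {u : ℂ} (hu : ‖u‖ < 1) : Continuous (sinhFoot u) := by
  have hk : Continuous (kleinProj u) := by unfold kleinProj; fun_prop
  exact hk.div (continuous_const.sub (hk.pow 2)).sqrt
    fun θ => (sqrt_pos.2 (one_sub_kleinProj_sq_pos hu θ)).ne'

theorem sinhFoot_le_sinhFoot {u v : ℂ} (hu : ‖u‖ < 1) (hv : ‖v‖ < 1) {θ : ℝ}
    (h : kleinProj v θ ≤ kleinProj u θ) : sinhFoot v θ ≤ sinhFoot u θ :=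
  monotoneOn_div_sqrt_one_sub_sq (abs_lt.1 (abs_kleinProj_lt_one hv θ))
    (abs_lt.1 (abs_kleinProj_lt_one hu θ)) h

theorem kleinProj_antiperiodic (u : ℂ) : Function.Antiperiodic (kleinProj u) π := fun θ => by
  simp only [kleinProj, cos_add_pi, sin_add_pi]; ring

theorem sinhFoot_antiperiodic (u : ℂ) : Function.Antiperiodic (sinhFoot u) π := fun θ => by
  simp only [sinhFoot, kleinProj_antiperiodic u θ, neg_sq, neg_div]

theorem signedDistDiameter_antiperiodic (u : ℂ) :
    Function.Antiperiodic (signedDistDiameter u) π := fun θ => by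
  simp only [signedDistDiameter, cos_add_pi, sin_add_pi, ← arsinh_neg]
  ring_nf

/-- Hyperbolic Pythagoras: `(1 + ‖u‖ ^ 2) / (1 - ‖u‖ ^ 2) = cosh (poincareDist 0 u)` and
`√(1 - kleinProj u θ ^ 2)` is the inverse of `cosh` of the position of the foot. -/
theorem cosh_signedDistDiameter {u : ℂ} (hu : ‖u‖ < 1) (θ : ℝ) :
    cosh (signedDistDiameter u θ) =
      (1 + ‖u‖ ^ 2) / (1 - ‖u‖ ^ 2) * √(1 - kleinProj u θ ^ 2) := by
  have hq := one_sub_norm_sq_pos hu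
  have h : 1 + (2 * (u.re * sin θ - u.im * cos θ) / (1 - ‖u‖ ^ 2)) ^ 2 =
      ((1 + ‖u‖ ^ 2) / (1 - ‖u‖ ^ 2)) ^ 2 * (1 - kleinProj u θ ^ 2) := by
    rw [kleinProj]
    field_simp
    linear_combination 4 * rotated_sq_add_sq_eq_norm_sq u θ
  rw [signedDistDiameter, cosh_arsinh, h, sqrt_mul (by positivity), sqrt_sq (by positivity)]

theorem hasDerivAt_signedDistDiameter {u : ℂ} (hu : ‖u‖ < 1) (θ : ℝ) :
    HasDerivAt (signedDistDiameter u) (sinhFoot u θ) θ := by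
  have hq := one_sub_norm_sq_pos hu
  have hg : HasDerivAt (fun θ => 2 * (u.re * sin θ - u.im * cos θ) / (1 - ‖u‖ ^ 2))
      (2 * (u.re * cos θ + u.im * sin θ) / (1 - ‖u‖ ^ 2)) θ :=
    (((((hasDerivAt_sin θ).const_mul u.re).sub
      ((hasDerivAt_cos θ).const_mul u.im)).const_mul 2).div_const _).congr_deriv (by ring)
  refine hg.arsinh.congr_deriv ?_
  rw [← cosh_arsinh, ← signedDistDiameter, cosh_signedDistDiameter hu, sinhFoot, smul_eq_mul]
  field_simp
  rw [kleinProj]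
  field_simp

theorem poincareDist_eq_abs_sub_signedDistDiameter {u v : ℂ} (hu : ‖u‖ < 1) (hv : ‖v‖ < 1)
    {θ : ℝ} (h : kleinProj u θ = kleinProj v θ) :
    poincareDist u v = |signedDistDiameter u θ - signedDistDiameter v θ| := by
  have hqu := one_sub_norm_sq_pos hu
  have hqv := one_sub_norm_sq_pos hv
  have hsq := mul_self_sqrt (one_sub_kleinProj_sq_pos hu θ).le
  have hprod : (1 + ‖u‖ ^ 2) * (1 + ‖v‖ ^ 2) * kleinProj u θ ^ 2 =
      4 * (u.re * cos θ + u.im * sin θ) * (v.re * cos θ + v.im * sin θ) := by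
    rw [sq (kleinProj u θ)]
    nth_rewrite 2 [h]
    simp only [kleinProj]
    field_simp
    ring
  have hrot : (u.re * cos θ + u.im * sin θ) * (v.re * cos θ + v.im * sin θ) +
      (u.re * sin θ - u.im * cos θ) * (v.re * sin θ - v.im * cos θ) =
        u.re * v.re + u.im * v.im := by
    linear_combination (u.re * v.re + u.im * v.im) * sin_sq_add_cos_sq θ
  have hdist : ‖u - v‖ ^ 2 = ‖u‖ ^ 2 + ‖v‖ ^ 2 - 2 * (u.re * v.re + u.im * v.im) := by
    simp only [Complex.sq_norm, Complex.normSq_apply, Complex.sub_re, Complex.sub_im]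
    ring
  have hcosh : cosh (signedDistDiameter u θ - signedDistDiameter v θ) =
      1 + 2 * ‖u - v‖ ^ 2 / ((1 - ‖u‖ ^ 2) * (1 - ‖v‖ ^ 2)) := by
    rw [cosh_sub, cosh_signedDistDiameter hu, cosh_signedDistDiameter hv, ← h]
    simp only [signedDistDiameter, sinh_arsinh]
    field_simp
    linear_combination (1 + ‖u‖ ^ 2) * (1 + ‖v‖ ^ 2) * hsq - hprod - 4 * hrot - 2 * hdist
  rw [poincareDist, ← hcosh, ← cosh_abs, show _root_.arcosh = Real.arcosh from rfl,
    arcosh_cosh (abs_nonneg _)]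

theorem exists_kleinProj_sub_kleinProj_eq_mul_sin (u v : ℂ) :
    ∃ ρ φ : ℝ, 0 ≤ ρ ∧ ∀ θ, kleinProj u θ - kleinProj v θ = ρ * sin (θ - φ) := by
  set w : ℂ := (2 / (1 + ‖u‖ ^ 2) : ℝ) * u - (2 / (1 + ‖v‖ ^ 2) : ℝ) * v
  obtain ⟨φ, hφ⟩ := exists_re_mul_cos_add_im_mul_sin_eq w
  refine ⟨‖w‖, φ, norm_nonneg w, fun θ => ?_⟩
  rw [← hφ]
  simp only [kleinProj, w, Complex.sub_re, Complex.sub_im, Complex.re_ofReal_mul,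
    Complex.im_ofReal_mul]
  ring

theorem integral_abs_sub_sinhFoot {u v : ℂ} (hu : ‖u‖ < 1) (hv : ‖v‖ < 1) :
    ∫ θ in (0 : ℝ)..2 * π, |sinhFoot u θ - sinhFoot v θ| = 4 * poincareDist u v := by
  obtain ⟨ρ, φ, hρ, hφ⟩ := exists_kleinProj_sub_kleinProj_eq_mul_sin u v
  have hsign : ∀ θ ∈ Set.Icc φ (φ + π), 0 ≤ sinhFoot u θ - sinhFoot v θ := fun θ hθ =>
    sub_nonneg.2 <| sinhFoot_le_sinhFoot hu hv <| sub_nonneg.1 <| (hφ θ).symm ▸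
      mul_nonneg hρ (sin_nonneg_of_nonneg_of_le_pi (by linarith [hθ.1]) (by linarith [hθ.2]))
  have hFTC : ∫ θ in φ..φ + π, (sinhFoot u θ - sinhFoot v θ) =
      (signedDistDiameter u (φ + π) - signedDistDiameter v (φ + π)) -
        (signedDistDiameter u φ - signedDistDiameter v φ) :=
    intervalIntegral.integral_eq_sub_of_hasDerivAt
      (fun θ _ => (hasDerivAt_signedDistDiameter hu θ).sub (hasDerivAt_signedDistDiameter hv θ))
      (((continuous_sinhFoot hu).sub (continuous_sinhFoot hv)).intervalIntegrable _ _)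
  rw [signedDistDiameter_antiperiodic u φ, signedDistDiameter_antiperiodic v φ] at hFTC
  have hnonneg : 0 ≤ ∫ θ in φ..φ + π, (sinhFoot u θ - sinhFoot v θ) :=
    intervalIntegral.integral_nonneg (by linarith [pi_pos]) hsign
  calc ∫ θ in (0 : ℝ)..2 * π, |sinhFoot u θ - sinhFoot v θ|
      = 2 * ∫ θ in φ..φ + π, |sinhFoot u θ - sinhFoot v θ| :=
        integral_abs_eq_two_mul_of_antiperiodic (f := fun θ => sinhFoot u θ - sinhFoot v θ)
          ((continuous_sinhFoot hu).sub (continuous_sinhFoot hv))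
          (fun θ => by simp only [sinhFoot_antiperiodic u θ, sinhFoot_antiperiodic v θ]; ring) φ
    _ = 2 * ∫ θ in φ..φ + π, (sinhFoot u θ - sinhFoot v θ) := by
        congr 1
        refine intervalIntegral.integral_congr fun θ hθ => abs_of_nonneg (hsign θ ?_)
        rwa [Set.uIcc_of_le (by linarith [pi_pos])] at hθ
    _ = 4 * |signedDistDiameter u φ - signedDistDiameter v φ| := by
        rw [abs_of_nonpos (by linarith)]
        linarith
    _ = 4 * poincareDist u v := by
        rw [poincareDist_eq_abs_sub_signedDistDiameter hu hv
          (sub_eq_zero.1 (by rw [hφ φ, sub_self, sin_zero, mul_zero]))]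

/- `ω = (θ, s)` stands for the geodesic orthogonal to the diameter through `exp (θ * I)` at signed
distance `arsinh s` from `0`, and `geodesicHash ω z` records the side of it on which `z` lies. -/
noncomputable def geodesicMeasure (S : ℝ) : Measure (ℝ × ℝ) :=
  volume[|Set.Ioc 0 (2 * π) ×ˢ Set.Icc (-S) S]

noncomputable def geodesicHash (ω : ℝ × ℝ) (z : ℂ) : Bool :=
  decide (ω.2 < sinhFoot z ω.1)

theorem isProbabilityMeasure_geodesicMeasure {S : ℝ} (hS : 0 < S) :
    IsProbabilityMeasure (geodesicMeasure S) := by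
  refine cond_isProbabilityMeasure_of_finite ?_ ?_ <;>
    rw [Measure.volume_eq_prod, Measure.prod_prod, Real.volume_Ioc, Real.volume_Icc]
  · simp [pi_pos, hS]
  · exact ENNReal.mul_ne_top ENNReal.ofReal_ne_top ENNReal.ofReal_ne_top

theorem geodesicMeasure_setOf_hash_eq {R : ℝ} (hR : 0 < R) {u v : ℂ} (hu : ‖u‖ < 1)
    (hv : ‖v‖ < 1) (hdu : poincareDist 0 u ≤ R) (hdv : poincareDist 0 v ≤ R) :
    geodesicMeasure (sinh R) {ω | geodesicHash ω u = geodesicHash ω v} =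
      1 - ENNReal.ofReal (poincareDist u v / (π * sinh R)) := by
  have hS : 0 < sinh R := sinh_pos_iff.2 hR
  have hbound : ∀ {z : ℂ}, ‖z‖ < 1 → poincareDist 0 z ≤ R → ∀ θ, |sinhFoot z θ| ≤ sinh R :=
    fun hz hdz θ => (abs_sinhFoot_le hz θ).trans (sinh_le_sinh.2 hdz)
  have hsep : {ω | geodesicHash ω u = geodesicHash ω v} =
      {ω : ℝ × ℝ | ω.2 ∈ Set.Ico (min (sinhFoot u ω.1) (sinhFoot v ω.1))
        (max (sinhFoot u ω.1) (sinhFoot v ω.1))}ᶜ := by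
    ext ω
    exact decide_lt_eq_decide_lt_iff
  have hmeas : MeasurableSet {ω : ℝ × ℝ | ω.2 ∈ Set.Ico (min (sinhFoot u ω.1) (sinhFoot v ω.1))
        (max (sinhFoot u ω.1) (sinhFoot v ω.1))} :=
    (measurableSet_le (((continuous_sinhFoot hu).min (continuous_sinhFoot hv)).measurable.comp
      measurable_fst) measurable_snd).inter (measurableSet_lt measurable_snd
      (((continuous_sinhFoot hu).max (continuous_sinhFoot hv)).measurable.comp measurable_fst))
  have := isProbabilityMeasure_geodesicMeasure hS
  rw [hsep, prob_compl_eq_one_sub hmeas, geodesicMeasure,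
    cond_Ioc_prod_Icc_regionBetween_co (continuous_sinhFoot hu) (continuous_sinhFoot hv)
      (by positivity) hS (hbound hu hdu) (hbound hv hdv), integral_abs_sub_sinhFoot hu hv]
  congr 2
  field_simp
  ring

theorem lsh_hyperbolic_plane (r c R : ℝ) (hr : 0 < r) (hc : 1 < c) (hR : 0 < R)
    (hcrR : c * r < π * Real.sinh R) :
    (0 < 1 - c * r / (π * Real.sinh R)) ∧
    (1 - c * r / (π * Real.sinh R) < 1 - r / (π * Real.sinh R)) ∧
    (1 - r / (π * Real.sinh R) < 1) ∧
    ∃ (μ : Measure (ℝ × ℝ)) (_ : IsProbabilityMeasure μ) (H : ℝ × ℝ → ℂ → Bool),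
      (∀ u v : ℂ, ‖u‖ < 1 → ‖v‖ < 1 →
        poincareDist 0 u ≤ R → poincareDist 0 v ≤ R →
          (poincareDist u v ≤ r →
            μ {ω | H ω u = H ω v} ≥ ENNReal.ofReal (1 - r / (π * Real.sinh R))) ∧
          (poincareDist u v ≥ c * r →
            μ {ω | H ω u = H ω v} ≤ ENNReal.ofReal (1 - c * r / (π * Real.sinh R)))) ∧
      Real.log (1 / (1 - r / (π * Real.sinh R))) /
        Real.log (1 / (1 - c * r / (π * Real.sinh R))) ≤ 1 / c := by
  have hS : 0 < π * sinh R := mul_pos pi_pos (sinh_pos_iff.2 hR)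
  have hx : 0 < r / (π * sinh R) := div_pos hr hS
  have hcx : c * r / (π * sinh R) < 1 := (div_lt_one hS).2 hcrR
  have hxcx : r / (π * sinh R) < c * r / (π * sinh R) := by gcongr; nlinarith
  refine ⟨by linarith, by linarith, by linarith, geodesicMeasure (sinh R),
    isProbabilityMeasure_geodesicMeasure (sinh_pos_iff.2 hR), geodesicHash,
    fun u v hu hv hdu hdv => ?_, ?_⟩
  · rw [geodesicMeasure_setOf_hash_eq hR hu hv hdu hdv, ENNReal.ofReal_sub _ hx.le,
      ENNReal.ofReal_sub _ (hx.trans hxcx).le, ENNReal.ofReal_one]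
    exact ⟨fun h => tsub_le_tsub_left (ENNReal.ofReal_le_ofReal (by gcongr)) 1,
      fun h => tsub_le_tsub_left (ENNReal.ofReal_le_ofReal (by gcongr)) 1⟩
  · rw [mul_div_assoc] at hcx ⊢
    exact log_one_div_one_sub_ratio_le hx hc.le hcx
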